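/- arXiv:1711.01937 — 3 statements merged into one kernel-verified Lean document; each statement's English description precedes it below -/
import Mathlib

section
/- Let {a_k} be a sequence of nonnegative real numbers satisfying a_{k+1} ≤ (1+γ_k)a_k + δ_k for all k ≥ 0, where {γ_k} and {δ_k} are nonnegative sequences with ∑γ_k < ∞ and ∑δ_k < ∞. Then lim_{k→∞} a_k exists. -/
theorem stmt_0 (a γ δ : ℕ → ℝ)
    (ha : ∀ k, 0 ≤ a k) (hγ : ∀ k, 0 ≤ γ k) (hδ : ∀ k, 0 ≤ δ k)
    (hγs : Summable γ) (hδs : Summable δ)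
    (hrec : ∀ k, a (k + 1) ≤ (1 + γ k) * a k + δ k) :
    ∃ l : ℝ, Filter.Tendsto a Filter.atTop (nhds l) := by
  set P : ℕ → ℝ := fun k => ∏ j ∈ Finset.range k, (1 + γ j) with hPdef
  have hP1 : ∀ k, 1 ≤ P k := by
    intro k
    show (1:ℝ) ≤ ∏ j ∈ Finset.range k, (1 + γ j)
    calc (1:ℝ) = ∏ _j ∈ Finset.range k, (1:ℝ) := by simp
      _ ≤ ∏ j ∈ Finset.range k, (1 + γ j) :=
          Finset.prod_le_prod (fun j _ => zero_le_one) (fun j _ => by linarith [hγ j])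
  have hPpos : ∀ k, 0 < P k := fun k => lt_of_lt_of_le one_pos (hP1 k)
  have hPsucc : ∀ k, P (k + 1) = P k * (1 + γ k) := by
    intro k; simp [hPdef, Finset.prod_range_succ]
  have hPmono : Monotone P := by
    apply monotone_nat_of_le_succ
    intro k
    rw [hPsucc k]
    nlinarith [hPpos k, hγ k]
  have hPbdd : ∀ k, P k ≤ Real.exp (∑' j, γ j) := by
    intro k
    calc P k ≤ ∏ j ∈ Finset.range k, Real.exp (γ j) := by
            apply Finset.prod_le_prod
            · intro j _; linarith [hγ j]
            · intro j _; linarith [Real.add_one_le_exp (γ j)]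
      _ = Real.exp (∑ j ∈ Finset.range k, γ j) := (Real.exp_sum _ _).symm
      _ ≤ Real.exp (∑' j, γ j) := by
            apply Real.exp_le_exp.2
            exact Summable.sum_le_tsum _ (fun j _ => hγ j) hγs
  obtain ⟨Lp, hLp⟩ : ∃ Lp, Filter.Tendsto P Filter.atTop (nhds Lp) := by
    refine ⟨_, tendsto_atTop_ciSup hPmono ⟨Real.exp (∑' j, γ j), ?_⟩⟩
    rintro x ⟨k, rfl⟩; exact hPbdd k
  set b : ℕ → ℝ := fun k => a k / P k with hbdef
  have hb : ∀ k, b (k + 1) ≤ b k + δ k := by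
    intro k
    have h1 : b (k + 1) ≤ ((1 + γ k) * a k + δ k) / P (k + 1) := by
      exact div_le_div_of_nonneg_right (hrec k) (hPpos (k + 1)).le
    have h2 : ((1 + γ k) * a k + δ k) / P (k + 1) = a k / P k + δ k / P (k + 1) := by
      have h0 : P k ≠ 0 := (hPpos k).ne'
      have h1' : (1 : ℝ) + γ k ≠ 0 := by linarith [hγ k]
      rw [hPsucc k]
      field_simp
    have h3 : δ k / P (k + 1) ≤ δ k := by
      rw [div_le_iff₀ (hPpos (k + 1))]
      nlinarith [hP1 (k + 1), hδ k]
    calc b (k + 1) ≤ a k / P k + δ k / P (k + 1) := by rw [← h2]; exact h1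
      _ ≤ b k + δ k := by simp [hbdef]; linarith
  set S : ℕ → ℝ := fun k => ∑ j ∈ Finset.range k, δ j with hSdef
  set c : ℕ → ℝ := fun k => b k - S k with hcdef
  have hcanti : Antitone c := by
    apply antitone_nat_of_succ_le
    intro k
    have : S (k + 1) = S k + δ k := by simp [hSdef, Finset.sum_range_succ]
    simp only [hcdef, this]
    linarith [hb k]
  have hcbdd : ∀ k, -(∑' j, δ j) ≤ c k := by
    intro k
    have hb0 : 0 ≤ b k := div_nonneg (ha k) (hPpos k).le
    have hS : S k ≤ ∑' j, δ j := Summable.sum_le_tsum _ (fun j _ => hδ j) hδs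
    simp only [hcdef]; linarith
  obtain ⟨Lc, hLc⟩ : ∃ Lc, Filter.Tendsto c Filter.atTop (nhds Lc) := by
    refine ⟨_, tendsto_atTop_ciInf hcanti ⟨-(∑' j, δ j), ?_⟩⟩
    rintro x ⟨k, rfl⟩; exact hcbdd k
  have hStend : Filter.Tendsto S Filter.atTop (nhds (∑' j, δ j)) :=
    hδs.hasSum.tendsto_sum_nat
  have hbtend : Filter.Tendsto b Filter.atTop (nhds (Lc + ∑' j, δ j)) := by
    have : b = fun k => c k + S k := by funext k; simp [hcdef]
    rw [this]
    exact hLc.add hStend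
  refine ⟨(Lc + ∑' j, δ j) * Lp, ?_⟩
  have : a = fun k => b k * P k := by
    funext k; simp [hbdef]
    rw [div_mul_cancel₀]
    exact (hPpos k).ne'
  rw [this]
  exact hbtend.mul hLp
end

section
/- Let y ∈ ℝ^n with ‖y‖₁ > 1, and let λ* > 0 satisfy ∑_i max{|y_i| − λ*, 0} = 1. Then x* defined by x*_i = max{|y_i| − λ*, 0}·sign(y_i) is the Euclidean projection of y onto the unit ℓ¹-ball {x : ‖x‖₁ ≤ 1}. -/
theorem stmt_15 (n : ℕ) (y : EuclideanSpace ℝ (Fin n))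
    (hy : 1 < ∑ i, |y i|)
    (lam : ℝ) (hlam : 0 < lam)
    (hsum : (∑ i, max (|y i| - lam) 0) = 1)
    (xs : EuclideanSpace ℝ (Fin n))
    (hxs : ∀ i, xs i = max (|y i| - lam) 0 * (if 0 ≤ y i then 1 else -1)) :
    (∑ i, |xs i|) ≤ 1 ∧
    ∀ z : EuclideanSpace ℝ (Fin n), (∑ i, |z i|) ≤ 1 → ‖y - xs‖ ≤ ‖y - z‖ := by
  have habs : ∀ i, |xs i| = max (|y i| - lam) 0 := by
    intro i
    rw [hxs i, abs_mul]
    have h1 : |(if 0 ≤ y i then (1:ℝ) else -1)| = 1 := by split <;> norm_num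
    rw [h1, mul_one, abs_of_nonneg (le_max_right _ _)]
  have hsum' : ∑ i, |xs i| = 1 := by
    rw [Finset.sum_congr rfl fun i _ => habs i]; exact hsum
  refine ⟨hsum'.le, ?_⟩
  intro z hz
  have hkey : ∀ i, (y i - xs i) * (z i - xs i) ≤ lam * |z i| - lam * |xs i| := by
    intro i
    have hB : (y i - xs i) * xs i = lam * |xs i| := by
      rcases le_or_gt (|y i|) lam with h | h
      · have hz0 : xs i = 0 := by
          rw [hxs i, max_eq_right (by linarith), zero_mul]
        simp [hz0]
      · have hmax : max (|y i| - lam) 0 = |y i| - lam := max_eq_left (by linarith)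
        rw [habs i, hxs i, hmax]
        rcases le_or_gt 0 (y i) with hyi | hyi
        · rw [if_pos hyi, abs_of_nonneg hyi]; ring
        · rw [if_neg (not_le.mpr hyi), abs_of_neg hyi]; ring
    have hle : |y i - xs i| ≤ lam := by
      rcases le_or_gt (|y i|) lam with h | h
      · have hz0 : xs i = 0 := by
          rw [hxs i, max_eq_right (by linarith), zero_mul]
        rw [hz0, sub_zero]; linarith
      · have hmax : max (|y i| - lam) 0 = |y i| - lam := max_eq_left (by linarith)
        rcases le_or_gt 0 (y i) with hyi | hyi
        · rw [hxs i, if_pos hyi, hmax, abs_of_nonneg hyi, mul_one,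
            show y i - (y i - lam) = lam by ring, abs_of_pos hlam]
        · rw [hxs i, if_neg (not_le.mpr hyi), hmax, abs_of_neg hyi,
            show y i - (-y i - lam) * (-1) = -lam by ring, abs_neg, abs_of_pos hlam]
    have hC : (y i - xs i) * z i ≤ lam * |z i| :=
      calc (y i - xs i) * z i ≤ |(y i - xs i) * z i| := le_abs_self _
        _ = |y i - xs i| * |z i| := abs_mul _ _
        _ ≤ lam * |z i| := mul_le_mul_of_nonneg_right hle (abs_nonneg _)
    nlinarith [hB, hC]
  have hsumkey : ∑ i, (y i - xs i) * (z i - xs i) ≤ 0 := by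
    have h1 : ∑ i, (y i - xs i) * (z i - xs i) ≤ ∑ i, (lam * |z i| - lam * |xs i|) :=
      Finset.sum_le_sum fun i _ => hkey i
    have h2 : ∑ i, (lam * |z i| - lam * |xs i|) =
        lam * (∑ i, |z i|) - lam * (∑ i, |xs i|) := by
      rw [Finset.sum_sub_distrib, Finset.mul_sum, Finset.mul_sum]
    have h3 : lam * (∑ i, |z i|) ≤ lam * 1 := by
      exact mul_le_mul_of_nonneg_left hz hlam.le
    rw [h2, hsum'] at h1
    linarith
  have hnorm : ∀ v : EuclideanSpace ℝ (Fin n), ‖v‖^2 = ∑ i, (v i)^2 := by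
    intro v
    rw [EuclideanSpace.norm_eq, Real.sq_sqrt (Finset.sum_nonneg fun i _ => sq_nonneg _)]
    exact Finset.sum_congr rfl fun i _ => by rw [Real.norm_eq_abs, sq_abs]
  have hsq : ‖y - xs‖^2 ≤ ‖y - z‖^2 := by
    rw [hnorm, hnorm]
    simp only [PiLp.sub_apply]
    have e : ∑ i, (y i - z i)^2 =
        ∑ i, (y i - xs i)^2 + (∑ i, (z i - xs i)^2
          - 2 * ∑ i, (y i - xs i) * (z i - xs i)) := by
      rw [Finset.mul_sum, ← Finset.sum_sub_distrib, ← Finset.sum_add_distrib]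
      exact Finset.sum_congr rfl fun i _ => by ring
    have hpos : 0 ≤ ∑ i, (z i - xs i)^2 :=
      Finset.sum_nonneg fun i _ => sq_nonneg _
    linarith
  nlinarith [norm_nonneg (y - xs), norm_nonneg (y - z)]
end

section
/- Let H be a real Hilbert space, C ⊆ H closed convex, γ > 0, μ ∈ (0,1), and F : H → H. Fix x ∈ H, set y = P_C(x − γF(x) + e) for some e ∈ H, and suppose γ‖F(x) − F(y)‖ ≤ μ‖x − y‖. Then for any w ∈ C, 2⟨x − γF(y) − y, w − y⟩ ≤ μ‖x − y‖² + (μ + ‖e‖)‖w − y‖² + ‖e‖. -/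
open RealInnerProductSpace

theorem stmt_19 {H : Type*} [NormedAddCommGroup H] [InnerProductSpace ℝ H]
    (C : Set H) (hne : C.Nonempty) (hclosed : IsClosed C) (hconv : Convex ℝ C)
    (P : H → H) (hPmem : ∀ u, P u ∈ C)
    (hPnear : ∀ u, ∀ z ∈ C, ‖u - P u‖ ≤ ‖u - z‖)
    (F : H → H) (γ μ : ℝ) (hγ : 0 < γ) (hμ : μ ∈ Set.Ioo (0 : ℝ) 1)
    (x e y : H) (hy : y = P (x - γ • F x + e))
    (harmijo : γ * ‖F x - F y‖ ≤ μ * ‖x - y‖) :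
    ∀ w ∈ C, 2 * ⟪x - γ • F y - y, w - y⟫ ≤
      μ * ‖x - y‖ ^ 2 + (μ + ‖e‖) * ‖w - y‖ ^ 2 + ‖e‖ := by
  intro w hw
  set u := x - γ • F x + e with hu
  have hyC : y ∈ C := hy ▸ hPmem u
  -- variational inequality
  have hvar : ∀ z ∈ C, ⟪u - y, z - y⟫ ≤ 0 := by
    refine (norm_eq_iInf_iff_real_inner_le_zero hconv hyC).mp ?_
    letI : Nonempty C := ⟨⟨y, hyC⟩⟩
    refine le_antisymm ?_ ?_
    · exact le_ciInf fun z => hy ▸ hPnear u z z.2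
    · exact ciInf_le ⟨0, Set.forall_mem_range.mpr fun z => norm_nonneg _⟩ (⟨y, hyC⟩ : C)
  have h1 : ⟪u - y, w - y⟫ ≤ 0 := hvar w hw
  have hdecomp : x - γ • F y - y = (u - y) - e + γ • (F x - F y) := by
    rw [hu]; module
  have h2 : ⟪γ • (F x - F y), w - y⟫ ≤ μ * ‖x - y‖ * ‖w - y‖ := by
    calc ⟪γ • (F x - F y), w - y⟫ ≤ ‖γ • (F x - F y)‖ * ‖w - y‖ :=
          real_inner_le_norm _ _
      _ = γ * ‖F x - F y‖ * ‖w - y‖ := by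
          rw [norm_smul, Real.norm_eq_abs, abs_of_pos hγ]
      _ ≤ μ * ‖x - y‖ * ‖w - y‖ := by
          apply mul_le_mul_of_nonneg_right harmijo (norm_nonneg _)
  have h3 : ⟪-e, w - y⟫ ≤ ‖e‖ * ‖w - y‖ := by
    calc ⟪-e, w - y⟫ ≤ ‖-e‖ * ‖w - y‖ := real_inner_le_norm _ _
      _ = ‖e‖ * ‖w - y‖ := by rw [norm_neg]
  have hsum : ⟪x - γ • F y - y, w - y⟫ ≤ μ * ‖x - y‖ * ‖w - y‖ + ‖e‖ * ‖w - y‖ := by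
    rw [hdecomp, sub_eq_add_neg (u - y) e, add_assoc, inner_add_left, inner_add_left]
    linarith
  have hab : 2 * (μ * ‖x - y‖ * ‖w - y‖) ≤ μ * ‖x - y‖ ^ 2 + μ * ‖w - y‖ ^ 2 := by
    nlinarith [sq_nonneg (‖x - y‖ - ‖w - y‖), hμ.1.le]
  have hcd : 2 * (‖e‖ * ‖w - y‖) ≤ ‖e‖ * ‖w - y‖ ^ 2 + ‖e‖ := by
    nlinarith [sq_nonneg (‖w - y‖ - 1), norm_nonneg e]
  nlinarith [hsum]
end
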